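/- Assume Assumption 1 (continuity) and fix β ∈ (0,K). Let (λ*,γ*) be any minimizer of H over Δ and let Γ*_β(x,s) := {k ∈ [K] : p_k(x,s) ≥ λ* + γ*_{k,s}/π_s}. If Γ̃ ∈ 𝚪 is any solution of the constrained problem — i.e. Γ̃ is DP-fair, 𝒯(Γ̃) ≤ β, and R(Γ̃) ≤ R(Γ) for every DP-fair Γ ∈ 𝚪 with 𝒯(Γ) ≤ β — then Γ̃(X,S) = Γ*_β(X,S) ℙ-almost surely. -/

import Mathlib

open MeasureTheory Set Filter

noncomputable section

section Defs

variable {𝒳 𝒮 : Type*} [MeasurableSpace 𝒳] [MeasurableSpace 𝒮] {K : ℕ}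

/-- `π_s := ℙ(S = s)`. -/
def probS (μ : Measure (𝒳 × 𝒮 × Fin K)) (s : 𝒮) : ℝ :=
  (μ {ω | ω.2.1 = s}).toReal

/-- `ℙ(A | S = s) := ℙ(A ∩ {S = s}) / π_s`. -/
def condProb (μ : Measure (𝒳 × 𝒮 × Fin K)) (A : Set (𝒳 × 𝒮 × Fin K)) (s : 𝒮) : ℝ :=
  (μ (A ∩ {ω | ω.2.1 = s})).toReal / probS μ s

/-- Conditional expectation `E[f(X,S,Y) | S = s]`. -/
def condMean (μ : Measure (𝒳 × 𝒮 × Fin K)) (f : 𝒳 × 𝒮 × Fin K → ℝ) (s : 𝒮) : ℝ :=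
  (∫ ω in {ω : 𝒳 × 𝒮 × Fin K | ω.2.1 = s}, f ω ∂μ) / probS μ s

/-- The event `{k ∈ Γ(X,S)}`. -/
def memEvent (Γ : 𝒳 → 𝒮 → Set (Fin K)) (k : Fin K) : Set (𝒳 × 𝒮 × Fin K) :=
  {ω | k ∈ Γ ω.1 ω.2.1}

/-- A set-valued classifier: each membership set is measurable. -/
def IsClassifier (Γ : 𝒳 → 𝒮 → Set (Fin K)) : Prop :=
  ∀ k : Fin K, MeasurableSet {q : 𝒳 × 𝒮 | k ∈ Γ q.1 q.2}

/-- Risk `R(Γ) := ℙ(Y ∉ Γ(X,S))`. -/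
def risk (μ : Measure (𝒳 × 𝒮 × Fin K)) (Γ : 𝒳 → 𝒮 → Set (Fin K)) : ℝ :=
  (μ {ω | ω.2.2 ∉ Γ ω.1 ω.2.1}).toReal

/-- Expected size `𝒯(Γ) := E[|Γ(X,S)|]`. -/
def expSize (μ : Measure (𝒳 × 𝒮 × Fin K)) (Γ : 𝒳 → 𝒮 → Set (Fin K)) : ℝ :=
  ∫ ω, ((Γ ω.1 ω.2.1).ncard : ℝ) ∂μ

/-- Demographic parity: `ℙ(k ∈ Γ(X,S) | S = s) = ℙ(k ∈ Γ(X,S))` for all `k, s`. -/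
def DPfair (μ : Measure (𝒳 × 𝒮 × Fin K)) (Γ : 𝒳 → 𝒮 → Set (Fin K)) : Prop :=
  ∀ (k : Fin K) (s : 𝒮), condProb μ (memEvent Γ k) s = (μ (memEvent Γ k)).toReal

/-- Unfairness measure `𝒰(Γ)`. -/
def unfairness (μ : Measure (𝒳 × 𝒮 × Fin K)) (Γ : 𝒳 → 𝒮 → Set (Fin K)) : ℝ :=
  ⨆ k : Fin K, ⨆ s : 𝒮, ⨆ s' : 𝒮,
    |condProb μ (memEvent Γ k) s - condProb μ (memEvent Γ k) s'|

/-- Conditional cdf `F_{k,s}(t) := ℙ(p_k(X,S) ≤ t | S = s)`. -/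
def Fks (μ : Measure (𝒳 × 𝒮 × Fin K)) (p : Fin K → 𝒳 → 𝒮 → ℝ) (k : Fin K) (s : 𝒮) (t : ℝ) : ℝ :=
  condProb μ {ω | p k ω.1 ω.2.1 ≤ t} s

/-- cdf `F_k(t) := ℙ(p_k(X,S) ≤ t)`. -/
def Fk (μ : Measure (𝒳 × 𝒮 × Fin K)) (p : Fin K → 𝒳 → 𝒮 → ℝ) (k : Fin K) (t : ℝ) : ℝ :=
  (μ {ω | p k ω.1 ω.2.1 ≤ t}).toReal

/-- `G(t) := Σ_k (1 - F_k(t))`. -/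
def Gfun (μ : Measure (𝒳 × 𝒮 × Fin K)) (p : Fin K → 𝒳 → 𝒮 → ℝ) (t : ℝ) : ℝ :=
  ∑ k : Fin K, (1 - Fk μ p k t)

/-- Assumption 1 (continuity of all the conditional cdfs `F_{k,s}`). -/
def Assumption1 (μ : Measure (𝒳 × 𝒮 × Fin K)) (p : Fin K → 𝒳 → 𝒮 → ℝ) : Prop :=
  ∀ (k : Fin K) (s : 𝒮), Continuous (fun t => Fks μ p k s t)

/-- Thresholding (oracle) classifier `{k : p_k(x,s) ≥ λ + γ_{k,s}/π_s}`. -/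
def oracle (μ : Measure (𝒳 × 𝒮 × Fin K)) (p : Fin K → 𝒳 → 𝒮 → ℝ)
    (lam : ℝ) (γ : Fin K → 𝒮 → ℝ) : 𝒳 → 𝒮 → Set (Fin K) :=
  fun x s => {k | lam + γ k s / probS μ s ≤ p k x s}

/-- The objective `H(λ,γ)`. -/
def Hfun [Fintype 𝒮] (μ : Measure (𝒳 × 𝒮 × Fin K)) (p : Fin K → 𝒳 → 𝒮 → ℝ) (β : ℝ)
    (lam : ℝ) (γ : Fin K → 𝒮 → ℝ) : ℝ :=
  (∑ k : Fin K, ∑ s : 𝒮,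
      condMean μ (fun ω => max (probS μ s * (p k ω.1 ω.2.1 - lam) - γ k s) 0) s) + lam * β

/-- Lagrangian risk `R_{λ,γ}(Γ)`. -/
def lagRisk [Fintype 𝒮] (μ : Measure (𝒳 × 𝒮 × Fin K)) (β lam : ℝ) (γ : Fin K → 𝒮 → ℝ)
    (Γ : 𝒳 → 𝒮 → Set (Fin K)) : ℝ :=
  risk μ Γ + lam * (expSize μ Γ - β) +
    ∑ k : Fin K, ∑ s : 𝒮, γ k s * condProb μ (memEvent Γ k) s

end Defs

/-- Generalized inverse `h⁻¹(u) := inf {t | h t ≤ u}` of a nonincreasing function. -/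
def ginv (h : ℝ → ℝ) (u : ℝ) : ℝ := sInf {t | h t ≤ u}

/-- The constraint set `Δ`. -/
def Δset (K : ℕ) (𝒮 : Type*) [Fintype 𝒮] : Set (ℝ × (Fin K → 𝒮 → ℝ)) :=
  {q | 0 ≤ q.1 ∧ ∀ k : Fin K, ∑ s : 𝒮, q.2 k s = 0}

section OneVar
variable {Ω : Type*} [MeasurableSpace Ω] {ν : Measure Ω} [IsFiniteMeasure ν]
  {q : Ω → ℝ}

lemma integrable_posPart (hq : Measurable q) (hb : ∀ ω, |q ω| ≤ 1) (c : ℝ) :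
    Integrable (fun ω => max (q ω - c) 0) ν := by
  refine (integrable_const (1 + |c|)).mono' ((hq.sub measurable_const).max measurable_const).aestronglyMeasurable ?_
  filter_upwards with ω
  have h1 := abs_le.mp (hb ω)
  rw [Real.norm_eq_abs, abs_of_nonneg (le_max_right _ _)]
  have := neg_abs_le c
  have := abs_nonneg c
  exact max_le (by linarith) (by linarith)

lemma J_shift_up (hq : Measurable q) (hb : ∀ ω, |q ω| ≤ 1) (c : ℝ) {δ : ℝ} (hδ : 0 ≤ δ) :
    ∫ ω, max (q ω - (c + δ)) 0 ∂ν
      ≤ ∫ ω, max (q ω - c) 0 ∂ν - δ * (ν {ω | c + δ < q ω}).toReal := by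
  have hs : MeasurableSet {ω | c + δ < q ω} := measurableSet_lt measurable_const hq
  have key : ∫ ω, (max (q ω - (c + δ)) 0 + ({ω | c + δ < q ω} : Set Ω).indicator (fun _ => δ) ω) ∂ν
      ≤ ∫ ω, max (q ω - c) 0 ∂ν := by
    apply integral_mono ((integrable_posPart hq hb _).add ((integrable_const δ).indicator hs))
      (integrable_posPart hq hb _)
    intro ω
    dsimp only
    by_cases h : c + δ < q ω
    · simp only [Pi.add_apply]
      rw [Set.indicator_of_mem (show ω ∈ {ω | c + δ < q ω} from h),
        max_eq_left (by linarith : (0:ℝ) ≤ q ω - (c+δ))]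
      have : q ω - c ≤ max (q ω - c) 0 := le_max_left _ _
      linarith
    · push_neg at h
      simp only [Pi.add_apply]
      rw [Set.indicator_of_notMem (show ω ∉ {ω | c + δ < q ω} by simp only [Set.mem_setOf_eq, not_lt]; exact h),
        max_eq_right (by linarith : q ω - (c+δ) ≤ 0), add_zero]
      exact le_max_right _ _
  rw [integral_add (integrable_posPart hq hb _) ((integrable_const δ).indicator hs),
    integral_indicator_const δ hs] at key
  simp only [smul_eq_mul, measureReal_def] at key
  linarith [key]

lemma J_shift_down (hq : Measurable q) (hb : ∀ ω, |q ω| ≤ 1) (c : ℝ) {δ : ℝ} (hδ : 0 ≤ δ) :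
    ∫ ω, max (q ω - (c - δ)) 0 ∂ν
      ≤ ∫ ω, max (q ω - c) 0 ∂ν + δ * (ν {ω | c - δ < q ω}).toReal := by
  have hs : MeasurableSet {ω | c - δ < q ω} := measurableSet_lt measurable_const hq
  have key : ∫ ω, max (q ω - (c - δ)) 0 ∂ν
      ≤ ∫ ω, (max (q ω - c) 0 + ({ω | c - δ < q ω} : Set Ω).indicator (fun _ => δ) ω) ∂ν := by
    apply integral_mono (integrable_posPart hq hb _)
      ((integrable_posPart hq hb _).add ((integrable_const δ).indicator hs))
    intro ω
    dsimp only
    by_cases h : c - δ < q ω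
    · simp only [Pi.add_apply]
      rw [Set.indicator_of_mem (show ω ∈ {ω | c - δ < q ω} from h)]
      have h2 : q ω - c ≤ max (q ω - c) 0 := le_max_left _ _
      have h3 : (0:ℝ) ≤ max (q ω - c) 0 := le_max_right _ _
      rcases max_cases (q ω - (c - δ)) 0 with ⟨he, _⟩ | ⟨he, _⟩ <;> rw [he] <;> linarith
    · push_neg at h
      simp only [Pi.add_apply]
      rw [Set.indicator_of_notMem (show ω ∉ {ω | c - δ < q ω} by simp only [Set.mem_setOf_eq, not_lt]; exact h),
        max_eq_right (by linarith : q ω - (c-δ) ≤ 0), add_zero]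
      exact le_max_right _ _
  rw [integral_add (integrable_posPart hq hb _) ((integrable_const δ).indicator hs),
    integral_indicator_const δ hs] at key
  simp only [smul_eq_mul, measureReal_def] at key
  linarith [key]

lemma tendsto_M_up (hq : Measurable q) {a : ℝ} (ha : 0 < a) (c : ℝ) :
    Tendsto (fun n : ℕ => (ν {ω | c + a / (n+1) < q ω}).toReal) atTop
      (nhds ((ν {ω | c < q ω}).toReal)) := by
  have hmono : Monotone (fun n : ℕ => {ω | c + a / (n+1) < q ω}) := by
    intro n m hnm ω hω
    simp only [Set.mem_setOf_eq] at *
    have h1 : a / (m+1) ≤ a / (n+1) :=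
      div_le_div_of_nonneg_left ha.le (by positivity) (by exact_mod_cast by omega)
    linarith
  have hU : (⋃ n : ℕ, {ω | c + a / (n+1) < q ω}) = {ω | c < q ω} := by
    ext ω
    simp only [Set.mem_iUnion, Set.mem_setOf_eq]
    constructor
    · rintro ⟨n, hn⟩; have : 0 < a / (n+1) := by positivity
      linarith
    · intro h
      obtain ⟨n, hn⟩ := exists_nat_one_div_lt (div_pos (by linarith : 0 < q ω - c) ha)
      refine ⟨n, ?_⟩
      rw [div_lt_div_iff₀ (by positivity) (by positivity)] at hn
      have : a / (n+1) < q ω - c := by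
        rw [div_lt_iff₀ (by positivity)]; nlinarith
      linarith
  have h := tendsto_measure_iUnion_atTop (μ := ν) hmono
  rw [hU] at h
  exact (ENNReal.tendsto_toReal (measure_ne_top ν _)).comp h

lemma measure_ge_eq_gt (hq : Measurable q) (c : ℝ) (hatom : ν {ω | q ω = c} = 0) :
    ν {ω | c ≤ q ω} = ν {ω | c < q ω} := by
  have hsub : {ω | c ≤ q ω} ⊆ {ω | c < q ω} ∪ {ω | q ω = c} := by
    intro ω hω
    simp only [Set.mem_setOf_eq, Set.mem_union] at *
    rcases lt_or_eq_of_le hω with h | h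
    · exact Or.inl h
    · exact Or.inr h.symm
  refine le_antisymm ?_ (measure_mono (fun ω hω => ?_))
  · calc ν {ω | c ≤ q ω} ≤ ν ({ω | c < q ω} ∪ {ω | q ω = c}) := measure_mono hsub
      _ ≤ ν {ω | c < q ω} + ν {ω | q ω = c} := measure_union_le _ _
      _ = ν {ω | c < q ω} := by rw [hatom, add_zero]
  · simp only [Set.mem_setOf_eq] at *; linarith

lemma tendsto_M_down (hq : Measurable q) {a : ℝ} (ha : 0 < a) (c : ℝ)
    (hatom : ν {ω | q ω = c} = 0) :
    Tendsto (fun n : ℕ => (ν {ω | c - a / (n+1) < q ω}).toReal) atTop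
      (nhds ((ν {ω | c < q ω}).toReal)) := by
  have hanti : Antitone (fun n : ℕ => {ω | c - a / (n+1) < q ω}) := by
    intro n m hnm ω hω
    simp only [Set.mem_setOf_eq] at *
    have h1 : a / (m+1) ≤ a / (n+1) :=
      div_le_div_of_nonneg_left ha.le (by positivity) (by exact_mod_cast by omega)
    linarith
  have hI : (⋂ n : ℕ, {ω | c - a / (n+1) < q ω}) = {ω | c ≤ q ω} := by
    ext ω
    simp only [Set.mem_iInter, Set.mem_setOf_eq]
    constructor
    · intro h
      by_contra hcon
      push_neg at hcon
      obtain ⟨n, hn⟩ := exists_nat_one_div_lt (div_pos (by linarith : 0 < c - q ω) ha)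
      rw [div_lt_div_iff₀ (by positivity) (by positivity)] at hn
      have h2 : a / (n+1) < c - q ω := by
        rw [div_lt_iff₀ (by positivity)]; nlinarith
      have := h n
      linarith
    · intro h n
      have : 0 < a / (n+1) := by positivity
      linarith
  have h := tendsto_measure_iInter_atTop (μ := ν)
    (fun n => (measurableSet_lt measurable_const hq).nullMeasurableSet) hanti
    ⟨0, measure_ne_top ν _⟩
  rw [hI, measure_ge_eq_gt hq c hatom] at h
  exact (ENNReal.tendsto_toReal (measure_ne_top ν _)).comp h

lemma noatom_of_continuous (hq : Measurable q) {F : ℝ → ℝ} (hF : Continuous F) {π : ℝ}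
    (hFeq : ∀ t, (ν {ω | q ω ≤ t}).toReal = π * F t) (t₀ : ℝ) :
    ν {ω | q ω = t₀} = 0 := by
  set C : ℕ → Set Ω := fun n => {ω | q ω ≤ t₀} \ {ω | q ω ≤ t₀ - 1/(n+1)} with hC
  have hanti : Antitone C := by
    intro n m hnm ω hω
    simp only [hC, Set.mem_diff, Set.mem_setOf_eq] at *
    refine ⟨hω.1, fun hcon => hω.2 ?_⟩
    have h1 : (1:ℝ) / (m+1) ≤ 1 / (n+1) :=
      div_le_div_of_nonneg_left one_pos.le (by positivity) (by exact_mod_cast by omega)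
    linarith
  have hI : (⋂ n, C n) = {ω | q ω = t₀} := by
    ext ω
    simp only [hC, Set.mem_iInter, Set.mem_diff, Set.mem_setOf_eq, not_le]
    constructor
    · intro h
      have h1 := (h 0).1
      by_contra hcon
      have hlt : q ω < t₀ := lt_of_le_of_ne h1 hcon
      obtain ⟨n, hn⟩ := exists_nat_one_div_lt (show 0 < t₀ - q ω by linarith)
      have := (h n).2
      linarith
    · intro h n
      rw [h]
      refine ⟨le_refl _, ?_⟩
      have : (0:ℝ) < 1/(n+1:ℝ) := by positivity
      linarith
  have hmeas : ∀ t, MeasurableSet {ω | q ω ≤ t} := fun t => measurableSet_le hq measurable_const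
  have hsubn : ∀ n : ℕ, {ω | q ω ≤ t₀ - 1/(n+1)} ⊆ {ω | q ω ≤ t₀} := by
    intro n ω hω
    simp only [Set.mem_setOf_eq] at *
    have : (0:ℝ) < 1/(n+1) := by positivity
    linarith
  have hCval : ∀ n : ℕ, (ν (C n)).toReal = π * F t₀ - π * F (t₀ - 1/(n+1)) := by
    intro n
    rw [hC]
    rw [measure_diff (hsubn n) ((hmeas _).nullMeasurableSet) (measure_ne_top ν _),
      ENNReal.toReal_sub_of_le (measure_mono (hsubn n)) (measure_ne_top ν _), hFeq, hFeq]
  have hlim0 : Tendsto (fun n : ℕ => (ν (C n)).toReal) atTop (nhds 0) := by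
    simp_rw [hCval]
    have h1 : Tendsto (fun n : ℕ => t₀ - 1/(n+1:ℝ)) atTop (nhds t₀) := by
      have h2 := (tendsto_const_nhds (x := t₀) (f := atTop (α := ℕ))).sub
        tendsto_one_div_add_atTop_nhds_zero_nat
      simpa using h2
    have h3 := ((hF.tendsto t₀).comp h1).const_mul π
    have h4 := (tendsto_const_nhds (x := π * F t₀) (f := atTop (α := ℕ))).sub h3
    simpa using h4
  have hlim : Tendsto (fun n : ℕ => (ν (C n)).toReal) atTop (nhds ((ν (⋂ n, C n)).toReal)) := by
    have h := tendsto_measure_iInter_atTop (μ := ν)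
      (fun n => ((hmeas _).diff (hmeas _)).nullMeasurableSet) hanti ⟨0, measure_ne_top ν _⟩
    exact (ENNReal.tendsto_toReal (measure_ne_top ν _)).comp h
  have heq := tendsto_nhds_unique hlim hlim0
  rw [hI] at heq
  exact ((ENNReal.toReal_eq_zero_iff _).mp heq).resolve_right (measure_ne_top ν _)

end OneVar


section Setup
variable {𝒳 𝒮 : Type*} [MeasurableSpace 𝒳] [MeasurableSpace 𝒮] [MeasurableSingletonClass 𝒮]
  [Fintype 𝒮] {K : ℕ}

/-- restriction of `μ` to `{S = s}` -/
def nuS (μ : Measure (𝒳 × 𝒮 × Fin K)) (s : 𝒮) : Measure (𝒳 × 𝒮 × Fin K) :=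
  μ.restrict {ω | ω.2.1 = s}

lemma measurable_S : Measurable (fun ω : 𝒳 × 𝒮 × Fin K => ω.2.1) :=
  measurable_fst.comp measurable_snd

lemma measurableSet_As (s : 𝒮) : MeasurableSet {ω : 𝒳 × 𝒮 × Fin K | ω.2.1 = s} :=
  measurable_S (measurableSet_singleton s)

lemma measurable_XS : Measurable (fun ω : 𝒳 × 𝒮 × Fin K => (ω.1, ω.2.1)) :=
  measurable_fst.prodMk measurable_S

instance nuS_finite (μ : Measure (𝒳 × 𝒮 × Fin K)) [IsFiniteMeasure μ] (s : 𝒮) :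
    IsFiniteMeasure (nuS μ s) := by
  unfold nuS; infer_instance

lemma nuS_apply (μ : Measure (𝒳 × 𝒮 × Fin K)) (s : 𝒮) {E : Set (𝒳 × 𝒮 × Fin K)}
    (hE : MeasurableSet E) : nuS μ s E = μ (E ∩ {ω | ω.2.1 = s}) :=
  Measure.restrict_apply hE

lemma probS_eq (μ : Measure (𝒳 × 𝒮 × Fin K)) (s : 𝒮) :
    probS μ s = (nuS μ s Set.univ).toReal := by
  rw [nuS_apply μ s MeasurableSet.univ, Set.univ_inter]; rfl

lemma condProb_eq (μ : Measure (𝒳 × 𝒮 × Fin K)) (s : 𝒮) {E : Set (𝒳 × 𝒮 × Fin K)}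
    (hE : MeasurableSet E) : condProb μ E s = (nuS μ s E).toReal / probS μ s := by
  rw [condProb, nuS_apply μ s hE]

/-- partition of a measure over the groups -/
lemma measure_eq_sum_nuS (μ : Measure (𝒳 × 𝒮 × Fin K)) {E : Set (𝒳 × 𝒮 × Fin K)}
    (hE : MeasurableSet E) : μ E = ∑ s : 𝒮, nuS μ s E := by
  have h1 : E = ⋃ s ∈ (Finset.univ : Finset 𝒮), (E ∩ {ω | ω.2.1 = s}) := by
    ext ω
    simp only [Set.mem_iUnion, Set.mem_inter_iff, Finset.mem_univ, exists_prop, true_and]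
    exact ⟨fun h => ⟨ω.2.1, h, rfl⟩, fun ⟨s, h, _⟩ => h⟩
  conv_lhs => rw [h1]
  rw [measure_biUnion_finset]
  · exact Finset.sum_congr rfl fun s _ => (nuS_apply μ s hE).symm
  · intro s _ t _ hst
    simp only [Function.onFun, Set.disjoint_left]
    rintro ω ⟨-, h1⟩ ⟨-, h2⟩
    exact hst (h1 ▸ h2 ▸ rfl)
  · exact fun s _ => hE.inter (measurableSet_As s)

lemma toReal_measure_eq_sum_nuS (μ : Measure (𝒳 × 𝒮 × Fin K)) [IsFiniteMeasure μ]
    {E : Set (𝒳 × 𝒮 × Fin K)} (hE : MeasurableSet E) :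
    (μ E).toReal = ∑ s : 𝒮, (nuS μ s E).toReal := by
  rw [measure_eq_sum_nuS μ hE]
  rw [ENNReal.toReal_sum (fun s _ => measure_ne_top _ _)]

lemma sum_probS (μ : Measure (𝒳 × 𝒮 × Fin K)) [IsProbabilityMeasure μ] :
    ∑ s : 𝒮, probS μ s = 1 := by
  have h := toReal_measure_eq_sum_nuS μ (MeasurableSet.univ (α := 𝒳 × 𝒮 × Fin K))
  rw [measure_univ] at h
  simp only [ENNReal.toReal_one] at h
  rw [h]
  exact Finset.sum_congr rfl fun s _ => by rw [probS_eq]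

/-- integral splits over groups -/
lemma integral_eq_sum_nuS (μ : Measure (𝒳 × 𝒮 × Fin K)) [IsFiniteMeasure μ]
    {f : 𝒳 × 𝒮 × Fin K → ℝ} (hf : Integrable f μ) :
    ∫ ω, f ω ∂μ = ∑ s : 𝒮, ∫ ω, f ω ∂(nuS μ s) := by
  have h1 : μ = Measure.sum (fun s : 𝒮 => nuS μ s) := by
    ext E hE
    rw [Measure.sum_apply _ hE, measure_eq_sum_nuS μ hE, tsum_fintype]
  conv_lhs => rw [h1]
  rw [integral_sum_measure]
  · exact tsum_fintype _
  · rw [← h1]; exact hf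
end Setup

section Core
variable {𝒳 𝒮 : Type*} [MeasurableSpace 𝒳] [MeasurableSpace 𝒮] [MeasurableSingletonClass 𝒮]
  [Fintype 𝒮] {K : ℕ}

/-- `q_k(ω) = p_k(X,S)` -/
def qf (p : Fin K → 𝒳 → 𝒮 → ℝ) (k : Fin K) (ω : 𝒳 × 𝒮 × Fin K) : ℝ := p k ω.1 ω.2.1

/-- `J_{k,s}(c) = ∫_{S=s} (p_k - c)_+ dμ` -/
def Jf (μ : Measure (𝒳 × 𝒮 × Fin K)) (p : Fin K → 𝒳 → 𝒮 → ℝ) (k : Fin K) (s : 𝒮) (c : ℝ) : ℝ :=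
  ∫ ω, max (qf p k ω - c) 0 ∂(nuS μ s)

/-- `M_{k,s}(c) = μ({S=s} ∩ {p_k > c})` -/
def Mf (μ : Measure (𝒳 × 𝒮 × Fin K)) (p : Fin K → 𝒳 → 𝒮 → ℝ) (k : Fin K) (s : 𝒮) (c : ℝ) : ℝ :=
  ((nuS μ s) {ω | c < qf p k ω}).toReal

/-- the thresholds of the oracle rule -/
def cth (μ : Measure (𝒳 × 𝒮 × Fin K)) (lam : ℝ) (γ : Fin K → 𝒮 → ℝ) (k : Fin K) (s : 𝒮) : ℝ :=
  lam + γ k s / probS μ s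

variable {μ : Measure (𝒳 × 𝒮 × Fin K)} {p : Fin K → 𝒳 → 𝒮 → ℝ}

lemma qf_meas (hpmeas : ∀ k, Measurable fun q : 𝒳 × 𝒮 => p k q.1 q.2) (k : Fin K) :
    Measurable (qf p k) := (hpmeas k).comp measurable_XS

lemma qf_bdd (hp01 : ∀ k x s, p k x s ∈ Icc (0:ℝ) 1) (k : Fin K) (ω : 𝒳 × 𝒮 × Fin K) :
    |qf p k ω| ≤ 1 := by
  have h := hp01 k ω.1 ω.2.1
  simp only [qf, abs_le]; exact ⟨by linarith [h.1], h.2⟩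

lemma noatomS [IsProbabilityMeasure μ] (hπ : ∀ s : 𝒮, 0 < probS μ s)
    (hpmeas : ∀ k, Measurable fun q : 𝒳 × 𝒮 => p k q.1 q.2)
    (hA1 : Assumption1 μ p) (k : Fin K) (s : 𝒮) (t : ℝ) :
    nuS μ s {ω | qf p k ω = t} = 0 := by
  apply noatom_of_continuous (qf_meas hpmeas k) (hA1 k s) (π := probS μ s) (fun t => ?_) t
  have : Fks μ p k s t = (nuS μ s {ω | qf p k ω ≤ t}).toReal / probS μ s :=
    condProb_eq μ s (measurableSet_le (qf_meas hpmeas k) measurable_const)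
  rw [this, mul_div_cancel₀ _ (hπ s).ne']

lemma Mf_ge [IsProbabilityMeasure μ] (hπ : ∀ s : 𝒮, 0 < probS μ s)
    (hpmeas : ∀ k, Measurable fun q : 𝒳 × 𝒮 => p k q.1 q.2)
    (hA1 : Assumption1 μ p) (k : Fin K) (s : 𝒮) (c : ℝ) :
    ((nuS μ s) {ω | c ≤ qf p k ω}).toReal = Mf μ p k s c := by
  rw [Mf, measure_ge_eq_gt (qf_meas hpmeas k) c (noatomS hπ hpmeas hA1 k s c)]

/-- `H` in terms of `J` -/
lemma Hfun_eq (hπ : ∀ s : 𝒮, 0 < probS μ s) (β l : ℝ) (g : Fin K → 𝒮 → ℝ) :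
    Hfun μ p β l g = (∑ k : Fin K, ∑ s : 𝒮, Jf μ p k s (l + g k s / probS μ s)) + l * β := by
  rw [Hfun]
  congr 1
  refine Finset.sum_congr rfl fun k _ => Finset.sum_congr rfl fun s _ => ?_
  rw [condMean]
  have h1 : (fun ω : 𝒳 × 𝒮 × Fin K => max (probS μ s * (p k ω.1 ω.2.1 - l) - g k s) 0)
      = fun ω => probS μ s * max (qf p k ω - (l + g k s / probS μ s)) 0 := by
    funext ω
    rw [mul_max_of_nonneg _ _ (hπ s).le, mul_zero]
    congr 1
    field_simp [qf, (hπ s).ne']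
    unfold qf
    ring
  rw [h1]
  have h2 : ∫ ω in {ω : 𝒳 × 𝒮 × Fin K | ω.2.1 = s},
      probS μ s * max (qf p k ω - (l + g k s / probS μ s)) 0 ∂μ
      = probS μ s * Jf μ p k s (l + g k s / probS μ s) := by
    rw [Jf, nuS]
    exact integral_const_mul _ _
  rw [h2, mul_comm, mul_div_assoc, div_self (hπ s).ne', mul_one]

lemma memEvent_meas {Γ : 𝒳 → 𝒮 → Set (Fin K)} (hΓ : IsClassifier Γ) (k : Fin K) :
    MeasurableSet (memEvent Γ k) := measurable_XS (hΓ k)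

lemma oracle_isClassifier (hpmeas : ∀ k, Measurable fun q : 𝒳 × 𝒮 => p k q.1 q.2)
    (lam : ℝ) (γ : Fin K → 𝒮 → ℝ) : IsClassifier (oracle μ p lam γ) := by
  intro k
  have : {q : 𝒳 × 𝒮 | k ∈ oracle μ p lam γ q.1 q.2}
      = {q : 𝒳 × 𝒮 | lam + γ k q.2 / probS μ q.2 ≤ p k q.1 q.2} := rfl
  rw [this]
  exact measurableSet_le ((measurable_of_countable
    (fun s : 𝒮 => lam + γ k s / probS μ s)).comp measurable_snd) (hpmeas k)

lemma nuS_memEvent_oracle (lam : ℝ) (γ : Fin K → 𝒮 → ℝ) (k : Fin K) (s : 𝒮) :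
    (nuS μ s) (memEvent (oracle μ p lam γ) k) = (nuS μ s) {ω | cth μ lam γ k s ≤ qf p k ω} := by
  rw [nuS, Measure.restrict_apply' (measurableSet_As s),
    Measure.restrict_apply' (measurableSet_As s)]
  congr 1
  ext ω
  simp only [Set.mem_inter_iff, Set.mem_setOf_eq, memEvent, oracle, cth, qf]
  constructor
  · rintro ⟨h1, rfl⟩; exact ⟨h1, rfl⟩
  · rintro ⟨h1, rfl⟩; exact ⟨h1, rfl⟩

/-- the whole-space measure of a membership event splits over groups -/
lemma measure_memEvent_eq [IsProbabilityMeasure μ] {Γ : 𝒳 → 𝒮 → Set (Fin K)}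
    (hΓ : IsClassifier Γ) (k : Fin K) :
    (μ (memEvent Γ k)).toReal = ∑ s : 𝒮, ((nuS μ s) (memEvent Γ k)).toReal :=
  toReal_measure_eq_sum_nuS μ (memEvent_meas hΓ k)

lemma integrable_indicator_event [IsProbabilityMeasure μ] {Γ : 𝒳 → 𝒮 → Set (Fin K)}
    (hΓ : IsClassifier Γ) (k : Fin K) :
    Integrable ((memEvent Γ k).indicator (fun _ => (1:ℝ))) μ :=
  (integrable_const (1:ℝ)).indicator (memEvent_meas hΓ k)

lemma expSize_eq [IsProbabilityMeasure μ] {Γ : 𝒳 → 𝒮 → Set (Fin K)} (hΓ : IsClassifier Γ) :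
    expSize μ Γ = ∑ k : Fin K, (μ (memEvent Γ k)).toReal := by
  classical
  have hpt : ∀ ω : 𝒳 × 𝒮 × Fin K, ((Γ ω.1 ω.2.1).ncard : ℝ)
      = ∑ k : Fin K, (memEvent Γ k).indicator (fun _ => (1:ℝ)) ω := by
    intro ω
    have h1 : (Γ ω.1 ω.2.1).ncard = (Finset.univ.filter (· ∈ Γ ω.1 ω.2.1)).card := by
      rw [Set.ncard_eq_toFinset_card' (Γ ω.1 ω.2.1)]
      congr 1
      ext k
      simp [Set.mem_toFinset]
    rw [h1, Finset.card_filter]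
    push_cast
    refine Finset.sum_congr rfl fun k _ => ?_
    by_cases h : k ∈ Γ ω.1 ω.2.1
    · rw [if_pos h, Set.indicator_of_mem (show ω ∈ memEvent Γ k from h)]
    · rw [if_neg h, Set.indicator_of_notMem (show ω ∉ memEvent Γ k from h)]
  rw [expSize]
  calc ∫ ω, ((Γ ω.1 ω.2.1).ncard : ℝ) ∂μ
      = ∫ ω, (∑ k : Fin K, (memEvent Γ k).indicator (fun _ => (1:ℝ)) ω) ∂μ := by
        exact integral_congr_ae (Filter.Eventually.of_forall hpt)
    _ = ∑ k : Fin K, ∫ ω, (memEvent Γ k).indicator (fun _ => (1:ℝ)) ω ∂μ :=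
        integral_finset_sum _ (fun k _ => integrable_indicator_event hΓ k)
    _ = ∑ k : Fin K, (μ (memEvent Γ k)).toReal := by
        refine Finset.sum_congr rfl fun k _ => ?_
        rw [integral_indicator_const (1:ℝ) (memEvent_meas hΓ k), smul_eq_mul, mul_one, measureReal_def]

/-- splitting a set integral over groups -/
lemma setIntegral_eq_sum_nuS [IsProbabilityMeasure μ] {E : Set (𝒳 × 𝒮 × Fin K)}
    (hE : MeasurableSet E) {f : 𝒳 × 𝒮 × Fin K → ℝ} (hf : ∀ s, Integrable f (nuS μ s))
    (hf' : Integrable f (μ.restrict E)) :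
    ∫ ω in E, f ω ∂μ = ∑ s : 𝒮, ∫ ω in E, f ω ∂(nuS μ s) := by
  have h1 : ∀ s : 𝒮, (nuS μ s).restrict E = nuS (μ.restrict E) s := by
    intro s
    rw [nuS, nuS, Measure.restrict_restrict hE, Measure.restrict_restrict (measurableSet_As s),
      Set.inter_comm]
  have h2 := integral_eq_sum_nuS (μ.restrict E) (f := f) hf'
  rw [h2]
  exact Finset.sum_congr rfl fun s _ => by rw [h1 s]

lemma integrable_qf' (hpmeas : ∀ k, Measurable fun q : 𝒳 × 𝒮 => p k q.1 q.2)
    (hp01 : ∀ k x s, p k x s ∈ Icc (0:ℝ) 1) (k : Fin K)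
    (ν : Measure (𝒳 × 𝒮 × Fin K)) [IsFiniteMeasure ν] : Integrable (qf p k) ν := by
  refine (integrable_const (1:ℝ)).mono' (qf_meas hpmeas k).aestronglyMeasurable ?_
  filter_upwards with ω
  rw [Real.norm_eq_abs]
  exact qf_bdd hp01 k ω

lemma measurable_Y : Measurable (fun ω : 𝒳 × 𝒮 × Fin K => ω.2.2) :=
  measurable_snd.comp measurable_snd

lemma risk_eq [IsProbabilityMeasure μ] {Γ : 𝒳 → 𝒮 → Set (Fin K)} (hΓ : IsClassifier Γ)
    (hlink : ∀ (k : Fin K) (A : Set (𝒳 × 𝒮)), MeasurableSet A →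
      (μ {ω | ω.2.2 = k ∧ (ω.1, ω.2.1) ∈ A}).toReal
        = ∫ ω in {ω : 𝒳 × 𝒮 × Fin K | (ω.1, ω.2.1) ∈ A}, p k ω.1 ω.2.1 ∂μ) :
    risk μ Γ = 1 - ∑ k : Fin K, ∫ ω in memEvent Γ k, qf p k ω ∂μ := by
  have hEk : ∀ k : Fin K, MeasurableSet {ω : 𝒳 × 𝒮 × Fin K | ω.2.2 = k ∧ k ∈ Γ ω.1 ω.2.1} := by
    intro k
    exact (measurable_Y (measurableSet_singleton k)).inter (memEvent_meas hΓ k)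
  have hin : {ω : 𝒳 × 𝒮 × Fin K | ω.2.2 ∈ Γ ω.1 ω.2.1}
      = ⋃ k ∈ (Finset.univ : Finset (Fin K)), {ω | ω.2.2 = k ∧ k ∈ Γ ω.1 ω.2.1} := by
    ext ω
    simp only [Set.mem_setOf_eq, Set.mem_iUnion, Finset.mem_univ, exists_prop, true_and]
    exact ⟨fun h => ⟨ω.2.2, rfl, h⟩, fun ⟨k, h1, h2⟩ => h1 ▸ h2⟩
  have hmeas_in : MeasurableSet {ω : 𝒳 × 𝒮 × Fin K | ω.2.2 ∈ Γ ω.1 ω.2.1} := by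
    rw [hin]; exact (Finset.univ : Finset (Fin K)).measurableSet_biUnion (fun k _ => hEk k)
  have hcompl : {ω : 𝒳 × 𝒮 × Fin K | ω.2.2 ∉ Γ ω.1 ω.2.1}
      = {ω : 𝒳 × 𝒮 × Fin K | ω.2.2 ∈ Γ ω.1 ω.2.1}ᶜ := rfl
  rw [risk, hcompl, measure_compl hmeas_in (measure_ne_top _ _), measure_univ,
    ENNReal.toReal_sub_of_le prob_le_one ENNReal.one_ne_top, ENNReal.toReal_one]
  congr 1
  rw [hin, measure_biUnion_finset ?disj (fun k _ => hEk k)]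
  case disj =>
    intro k _ l _ hkl
    simp only [Function.onFun, Set.disjoint_left]
    rintro ω ⟨h1, -⟩ ⟨h2, -⟩
    exact hkl (h1 ▸ h2 ▸ rfl)
  rw [ENNReal.toReal_sum (fun k _ => measure_ne_top _ _)]
  refine Finset.sum_congr rfl fun k _ => ?_
  exact hlink k {q : 𝒳 × 𝒮 | k ∈ Γ q.1 q.2} (hΓ k)

lemma lagRisk_eq [IsProbabilityMeasure μ] (hπ : ∀ s : 𝒮, 0 < probS μ s)
    (hpmeas : ∀ k, Measurable fun q : 𝒳 × 𝒮 => p k q.1 q.2)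
    (hp01 : ∀ k x s, p k x s ∈ Icc (0:ℝ) 1)
    {Γ : 𝒳 → 𝒮 → Set (Fin K)} (hΓ : IsClassifier Γ)
    (hlink : ∀ (k : Fin K) (A : Set (𝒳 × 𝒮)), MeasurableSet A →
      (μ {ω | ω.2.2 = k ∧ (ω.1, ω.2.1) ∈ A}).toReal
        = ∫ ω in {ω : 𝒳 × 𝒮 × Fin K | (ω.1, ω.2.1) ∈ A}, p k ω.1 ω.2.1 ∂μ)
    (β lam : ℝ) (γ : Fin K → 𝒮 → ℝ) :
    lagRisk μ β lam γ Γ = 1 - lam * β + ∑ k : Fin K, ∑ s : 𝒮,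
      ∫ ω in memEvent Γ k, (cth μ lam γ k s - qf p k ω) ∂(nuS μ s) := by
  have hsplit : ∀ k : Fin K, ∫ ω in memEvent Γ k, qf p k ω ∂μ
      = ∑ s : 𝒮, ∫ ω in memEvent Γ k, qf p k ω ∂(nuS μ s) := by
    intro k
    exact setIntegral_eq_sum_nuS (memEvent_meas hΓ k)
      (fun s => integrable_qf' hpmeas hp01 k _) (integrable_qf' hpmeas hp01 k _)
  have hterm : ∀ (k : Fin K) (s : 𝒮), ∫ ω in memEvent Γ k, (cth μ lam γ k s - qf p k ω) ∂(nuS μ s)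
      = cth μ lam γ k s * ((nuS μ s) (memEvent Γ k)).toReal
        - ∫ ω in memEvent Γ k, qf p k ω ∂(nuS μ s) := by
    intro k s
    rw [integral_sub (integrableOn_const (C := cth μ lam γ k s) (measure_ne_top _ _))
      ((integrable_qf' hpmeas hp01 k (nuS μ s)).integrableOn), setIntegral_const, measureReal_def, smul_eq_mul,
      mul_comm]
  rw [lagRisk, risk_eq hΓ hlink, expSize_eq hΓ]
  have hcp : ∀ (k : Fin K) (s : 𝒮), condProb μ (memEvent Γ k) s
      = ((nuS μ s) (memEvent Γ k)).toReal / probS μ s :=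
    fun k s => condProb_eq μ s (memEvent_meas hΓ k)
  have hthis : ∀ k : Fin K, ∑ s : 𝒮, (cth μ lam γ k s * ((nuS μ s) (memEvent Γ k)).toReal
        - ∫ ω in memEvent Γ k, qf p k ω ∂(nuS μ s))
      = ∑ s : 𝒮, (lam * ((nuS μ s) (memEvent Γ k)).toReal
          + γ k s * (((nuS μ s) (memEvent Γ k)).toReal / probS μ s)
          - ∫ ω in memEvent Γ k, qf p k ω ∂(nuS μ s)) := by
    intro k
    refine Finset.sum_congr rfl fun s _ => ?_
    have hπs := (hπ s).ne'
    rw [cth]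
    field_simp
  simp only [hcp, hsplit, measure_memEvent_eq hΓ, hterm, hthis,
    Finset.sum_add_distrib, Finset.sum_sub_distrib, ← Finset.mul_sum]
  ring

/-- pointwise optimality defect -/
def gfn (μ : Measure (𝒳 × 𝒮 × Fin K)) (p : Fin K → 𝒳 → 𝒮 → ℝ) (lam : ℝ) (γ : Fin K → 𝒮 → ℝ)
    (Γ : 𝒳 → 𝒮 → Set (Fin K)) (k : Fin K) (s : 𝒮) (ω : 𝒳 × 𝒮 × Fin K) : ℝ :=
  max (qf p k ω - cth μ lam γ k s) 0
    - (memEvent Γ k).indicator (fun ω => qf p k ω - cth μ lam γ k s) ω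

lemma gfn_nonneg (lam : ℝ) (γ : Fin K → 𝒮 → ℝ) (Γ : 𝒳 → 𝒮 → Set (Fin K)) (k : Fin K) (s : 𝒮)
    (ω : 𝒳 × 𝒮 × Fin K) : 0 ≤ gfn μ p lam γ Γ k s ω := by
  rw [gfn]
  by_cases h : ω ∈ memEvent Γ k
  · rw [Set.indicator_of_mem h]
    have := le_max_left (qf p k ω - cth μ lam γ k s) 0
    linarith
  · rw [Set.indicator_of_notMem h, sub_zero]
    exact le_max_right _ _

lemma gfn_oracle_zero (lam : ℝ) (γ : Fin K → 𝒮 → ℝ) (k : Fin K) (s : 𝒮) (ω : 𝒳 × 𝒮 × Fin K)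
    (hs : ω.2.1 = s) : gfn μ p lam γ (oracle μ p lam γ) k s ω = 0 := by
  rw [gfn]
  by_cases h : ω ∈ memEvent (oracle μ p lam γ) k
  · rw [Set.indicator_of_mem h]
    have h2 : cth μ lam γ k s ≤ qf p k ω := by
      have h3 := h
      simp only [memEvent, oracle, Set.mem_setOf_eq] at h3
      rw [cth, qf, ← hs]
      exact h3
    rw [max_eq_left (by linarith), sub_self]
  · rw [Set.indicator_of_notMem h, sub_zero]
    have h2 : ¬ (cth μ lam γ k s ≤ qf p k ω) := by
      intro hc
      apply h
      rw [cth, qf, ← hs] at hc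
      exact hc
    rw [max_eq_right (by push_neg at h2; linarith)]

lemma integrable_gfn [IsProbabilityMeasure μ]
    (hpmeas : ∀ k, Measurable fun q : 𝒳 × 𝒮 => p k q.1 q.2)
    (hp01 : ∀ k x s, p k x s ∈ Icc (0:ℝ) 1) (lam : ℝ) (γ : Fin K → 𝒮 → ℝ)
    {Γ : 𝒳 → 𝒮 → Set (Fin K)} (hΓ : IsClassifier Γ) (k : Fin K) (s : 𝒮)
    (ν : Measure (𝒳 × 𝒮 × Fin K)) [IsFiniteMeasure ν] :
    Integrable (gfn μ p lam γ Γ k s) ν := by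
  apply Integrable.sub
  · exact integrable_posPart (qf_meas hpmeas k) (qf_bdd hp01 k) _
  · exact ((integrable_qf' hpmeas hp01 k ν).sub (integrable_const _)).indicator
      (memEvent_meas hΓ k)

lemma integral_gfn [IsProbabilityMeasure μ]
    (hpmeas : ∀ k, Measurable fun q : 𝒳 × 𝒮 => p k q.1 q.2)
    (hp01 : ∀ k x s, p k x s ∈ Icc (0:ℝ) 1) (lam : ℝ) (γ : Fin K → 𝒮 → ℝ)
    {Γ : 𝒳 → 𝒮 → Set (Fin K)} (hΓ : IsClassifier Γ) (k : Fin K) (s : 𝒮) :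
    ∫ ω, gfn μ p lam γ Γ k s ω ∂(nuS μ s)
      = Jf μ p k s (cth μ lam γ k s)
        + ∫ ω in memEvent Γ k, (cth μ lam γ k s - qf p k ω) ∂(nuS μ s) := by
  have h1 : ∫ ω, gfn μ p lam γ Γ k s ω ∂(nuS μ s)
      = (∫ ω, max (qf p k ω - cth μ lam γ k s) 0 ∂(nuS μ s))
        - ∫ ω, (memEvent Γ k).indicator (fun ω => qf p k ω - cth μ lam γ k s) ω ∂(nuS μ s) := by
    exact integral_sub (integrable_posPart (qf_meas hpmeas k) (qf_bdd hp01 k) _)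
      (((integrable_qf' hpmeas hp01 k _).sub (integrable_const _)).indicator
        (memEvent_meas hΓ k))
  rw [h1, integral_indicator (memEvent_meas hΓ k)]
  rw [Jf]
  have h2 : ∫ ω in memEvent Γ k, (cth μ lam γ k s - qf p k ω) ∂(nuS μ s)
      = - ∫ ω in memEvent Γ k, (qf p k ω - cth μ lam γ k s) ∂(nuS μ s) := by
    rw [← integral_neg]
    congr 1
    funext ω
    ring
  rw [h2]
  ring

/-- lagrangian risk in terms of `H` plus nonnegative defect -/
lemma lagRisk_decomp [IsProbabilityMeasure μ] (hπ : ∀ s : 𝒮, 0 < probS μ s)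
    (hpmeas : ∀ k, Measurable fun q : 𝒳 × 𝒮 => p k q.1 q.2)
    (hp01 : ∀ k x s, p k x s ∈ Icc (0:ℝ) 1)
    {Γ : 𝒳 → 𝒮 → Set (Fin K)} (hΓ : IsClassifier Γ)
    (hlink : ∀ (k : Fin K) (A : Set (𝒳 × 𝒮)), MeasurableSet A →
      (μ {ω | ω.2.2 = k ∧ (ω.1, ω.2.1) ∈ A}).toReal
        = ∫ ω in {ω : 𝒳 × 𝒮 × Fin K | (ω.1, ω.2.1) ∈ A}, p k ω.1 ω.2.1 ∂μ)
    (β lam : ℝ) (γ : Fin K → 𝒮 → ℝ) :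
    lagRisk μ β lam γ Γ = 1 - Hfun μ p β lam γ
      + ∑ k : Fin K, ∑ s : 𝒮, ∫ ω, gfn μ p lam γ Γ k s ω ∂(nuS μ s) := by
  rw [lagRisk_eq hπ hpmeas hp01 hΓ hlink β lam γ, Hfun_eq hπ β lam γ]
  have : ∀ (k : Fin K) (s : 𝒮), ∫ ω, gfn μ p lam γ Γ k s ω ∂(nuS μ s)
      = Jf μ p k s (lam + γ k s / probS μ s)
        + ∫ ω in memEvent Γ k, (cth μ lam γ k s - qf p k ω) ∂(nuS μ s) :=
    fun k s => integral_gfn hpmeas hp01 lam γ hΓ k s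
  simp only [this, Finset.sum_add_distrib]
  ring

lemma oracle_fair_le [IsProbabilityMeasure μ] (hπ : ∀ s : 𝒮, 0 < probS μ s)
    (hpmeas : ∀ k, Measurable fun q : 𝒳 × 𝒮 => p k q.1 q.2)
    (hp01 : ∀ k x s, p k x s ∈ Icc (0:ℝ) 1) (hA1 : Assumption1 μ p)
    (β lam : ℝ) (γ : Fin K → 𝒮 → ℝ) (hmem : (lam, γ) ∈ Δset K 𝒮)
    (hmin : ∀ r ∈ Δset K 𝒮, Hfun μ p β lam γ ≤ Hfun μ p β r.1 r.2)
    (k : Fin K) {s1 s2 : 𝒮} (h12 : s1 ≠ s2) :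
    Mf μ p k s1 (cth μ lam γ k s1)
      ≤ (probS μ s1 / probS μ s2) * Mf μ p k s2 (cth μ lam γ k s2) := by
  classical
  have hπ1 : 0 < probS μ s1 := hπ s1
  have hπ2 : 0 < probS μ s2 := hπ s2
  set π1 := probS μ s1 with hπ1d
  set π2 := probS μ s2 with hπ2d
  set r := π1 / π2 with hr
  have hrpos : 0 < r := div_pos hπ1 hπ2
  set c1 := cth μ lam γ k s1 with hc1
  set c2 := cth μ lam γ k s2 with hc2
  -- Step A : finite-difference inequality
  have stepA : ∀ ε : ℝ, 0 < ε →
      Mf μ p k s1 (c1 + ε) ≤ r * Mf μ p k s2 (c2 - r * ε) := by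
    intro ε hε
    set γ' : Fin K → 𝒮 → ℝ := fun k' s =>
      γ k' s + (if k' = k then (if s = s1 then ε * π1 else if s = s2 then -(ε * π1) else 0) else 0)
      with hγ'
    have hifsum : ∀ k' : Fin K, ∑ s : 𝒮,
        (if k' = k then (if s = s1 then ε * π1 else if s = s2 then -(ε * π1) else 0) else 0) = 0 := by
      intro k'
      by_cases hk : k' = k
      · simp only [hk, if_true]
        have hsplit2 : ∀ s : 𝒮, (if s = s1 then ε * π1 else if s = s2 then -(ε * π1) else 0)
            = (if s = s1 then ε * π1 else 0) + (if s = s2 then -(ε * π1) else 0) := by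
          intro s
          by_cases h1 : s = s1
          · rw [if_pos h1, if_pos h1, if_neg (by rw [h1]; exact h12), add_zero]
          · rw [if_neg h1, if_neg h1, zero_add]
        simp only [hsplit2]
        rw [Finset.sum_add_distrib, Finset.sum_ite_eq' Finset.univ s1,
          Finset.sum_ite_eq' Finset.univ s2]
        simp
      · simp [hk]
    have hmem' : (lam, γ') ∈ Δset K 𝒮 := by
      refine ⟨hmem.1, fun k' => ?_⟩
      simp only [hγ']
      rw [Finset.sum_add_distrib, hmem.2 k', hifsum k', add_zero]
    have hH := hmin (lam, γ') hmem'
    rw [Hfun_eq hπ, Hfun_eq hπ] at hH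
    set D1 := Jf μ p k s1 (c1 + ε) - Jf μ p k s1 c1 with hD1
    set D2 := Jf μ p k s2 (c2 - r * ε) - Jf μ p k s2 c2 with hD2
    -- the perturbed thresholds
    have hc' : ∀ (k' : Fin K) (s : 𝒮), lam + γ' k' s / probS μ s
        = cth μ lam γ k' s
          + (if k' = k then (if s = s1 then ε else if s = s2 then -(r*ε) else 0) else 0) := by
      intro k' s
      simp only [hγ', cth]
      by_cases hk : k' = k
      · simp only [hk, if_true]
        by_cases h1 : s = s1
        · subst h1
          rw [if_pos rfl, if_pos rfl, ← hπ1d]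
          field_simp
          ring
        · rw [if_neg h1, if_neg h1]
          by_cases h2 : s = s2
          · subst h2
            rw [if_pos rfl, if_pos rfl, ← hπ2d, hr]
            field_simp
            ring
          · rw [if_neg h2, if_neg h2, add_zero, add_zero]
      · simp [hk]
    -- rewrite double sum on the RHS
    have hFk : ∀ k' : Fin K, k' ≠ k →
        ∑ s : 𝒮, Jf μ p k' s (lam + γ' k' s / probS μ s)
          = ∑ s : 𝒮, Jf μ p k' s (cth μ lam γ k' s) := by
      intro k' hk
      refine Finset.sum_congr rfl fun s _ => ?_
      rw [hc' k' s, if_neg hk, add_zero]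
    have hFkk : ∑ s : 𝒮, Jf μ p k s (lam + γ' k s / probS μ s)
        = ∑ s : 𝒮, Jf μ p k s (cth μ lam γ k s) + (D1 + D2) := by
      have e1 : ∀ s : 𝒮, Jf μ p k s (lam + γ' k s / probS μ s)
          = Jf μ p k s (cth μ lam γ k s + (if s = s1 then ε else if s = s2 then -(r*ε) else 0)) := by
        intro s; rw [hc' k s, if_pos rfl]
      simp only [e1]
      have hs2mem : s2 ∈ (Finset.univ : Finset 𝒮) \ {s1} := by
        simp [Finset.mem_sdiff, Ne.symm h12]
      rw [Finset.sum_eq_sum_sdiff_singleton_add (Finset.mem_univ s1),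
        Finset.sum_eq_sum_sdiff_singleton_add hs2mem]
      rw [Finset.sum_eq_sum_sdiff_singleton_add (Finset.mem_univ s1)
          (fun s => Jf μ p k s (cth μ lam γ k s)),
        Finset.sum_eq_sum_sdiff_singleton_add hs2mem
          (fun s => Jf μ p k s (cth μ lam γ k s))]
      have e2 : ∑ s ∈ ((Finset.univ : Finset 𝒮) \ {s1}) \ {s2},
          Jf μ p k s (cth μ lam γ k s + (if s = s1 then ε else if s = s2 then -(r*ε) else 0))
          = ∑ s ∈ ((Finset.univ : Finset 𝒮) \ {s1}) \ {s2}, Jf μ p k s (cth μ lam γ k s) := by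
        refine Finset.sum_congr rfl fun s hs => ?_
        simp only [Finset.mem_sdiff, Finset.mem_singleton] at hs
        rw [if_neg hs.1.2, if_neg hs.2, add_zero]
      rw [e2, if_pos rfl, if_neg (Ne.symm h12), if_pos rfl]
      rw [hD1, hD2, ← hc1, ← hc2]
      have : c2 + -(r * ε) = c2 - r * ε := by ring
      rw [this]
      ring
    have hdiff : 0 ≤ D1 + D2 := by
      have hsum1 : ∑ k' : Fin K, ∑ s : 𝒮, Jf μ p k' s (lam + γ' k' s / probS μ s)
          = ∑ k' : Fin K, ∑ s : 𝒮, Jf μ p k' s (cth μ lam γ k' s) + (D1 + D2) := by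
        rw [Finset.sum_eq_sum_sdiff_singleton_add (Finset.mem_univ k)
            (fun k' => ∑ s : 𝒮, Jf μ p k' s (lam + γ' k' s / probS μ s)),
          Finset.sum_eq_sum_sdiff_singleton_add (Finset.mem_univ k)
            (fun k' => ∑ s : 𝒮, Jf μ p k' s (cth μ lam γ k' s))]
        rw [Finset.sum_congr rfl (fun k' hk' => hFk k'
          (by simp only [Finset.mem_sdiff, Finset.mem_singleton] at hk'; exact hk'.2)), hFkk]
        ring
      have hcth : ∀ (k' : Fin K) (s : 𝒮), lam + γ k' s / probS μ s = cth μ lam γ k' s := by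
        intro k' s; rw [cth]
      simp only [hcth] at hH
      rw [hsum1] at hH
      linarith
    -- shift inequalities
    have hJ1 : Jf μ p k s1 (c1 + ε) ≤ Jf μ p k s1 c1 - ε * Mf μ p k s1 (c1 + ε) := by
      rw [Jf, Jf, Mf]
      exact J_shift_up (qf_meas hpmeas k) (qf_bdd hp01 k) c1 hε.le
    have hJ2 : Jf μ p k s2 (c2 - r * ε) ≤ Jf μ p k s2 c2 + (r * ε) * Mf μ p k s2 (c2 - r * ε) := by
      rw [Jf, Jf, Mf]
      exact J_shift_down (qf_meas hpmeas k) (qf_bdd hp01 k) c2 (by positivity)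
    have hM1 : 0 ≤ Mf μ p k s1 (c1 + ε) := ENNReal.toReal_nonneg
    have hM2 : 0 ≤ Mf μ p k s2 (c2 - r * ε) := ENNReal.toReal_nonneg
    rw [hD1, hD2] at hdiff
    have hfin : ε * Mf μ p k s1 (c1 + ε) ≤ (r * ε) * Mf μ p k s2 (c2 - r * ε) := by linarith
    have hre : (r * ε) * Mf μ p k s2 (c2 - r * ε) = ε * (r * Mf μ p k s2 (c2 - r * ε)) := by ring
    rw [hre] at hfin
    exact le_of_mul_le_mul_left hfin hε
  -- Step B : take limits
  have hlhs : Tendsto (fun n : ℕ => Mf μ p k s1 (c1 + 1 / (n+1))) atTop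
      (nhds (Mf μ p k s1 c1)) := by
    simp only [Mf]
    exact tendsto_M_up (qf_meas hpmeas k) one_pos c1
  have hrhs : Tendsto (fun n : ℕ => r * Mf μ p k s2 (c2 - r / (n+1))) atTop
      (nhds (r * Mf μ p k s2 c2)) := by
    apply Filter.Tendsto.const_mul
    simp only [Mf]
    exact tendsto_M_down (qf_meas hpmeas k) hrpos c2 (noatomS hπ hpmeas hA1 k s2 c2)
  have hineq : ∀ n : ℕ, Mf μ p k s1 (c1 + 1 / (n+1)) ≤ r * Mf μ p k s2 (c2 - r / (n+1)) := by
    intro n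
    have h := stepA (1 / (n+1)) (by positivity)
    rw [mul_one_div] at h
    exact h
  have hlim := le_of_tendsto_of_tendsto' hlhs hrhs hineq
  calc Mf μ p k s1 c1 ≤ r * Mf μ p k s2 c2 := hlim
    _ = (probS μ s1 / probS μ s2) * Mf μ p k s2 c2 := by rw [hr]

lemma oracle_size_le [IsProbabilityMeasure μ] (hπ : ∀ s : 𝒮, 0 < probS μ s)
    (hpmeas : ∀ k, Measurable fun q : 𝒳 × 𝒮 => p k q.1 q.2)
    (hp01 : ∀ k x s, p k x s ∈ Icc (0:ℝ) 1)
    (β lam : ℝ) (γ : Fin K → 𝒮 → ℝ) (hmem : (lam, γ) ∈ Δset K 𝒮)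
    (hmin : ∀ r ∈ Δset K 𝒮, Hfun μ p β lam γ ≤ Hfun μ p β r.1 r.2) :
    ∑ k : Fin K, ∑ s : 𝒮, Mf μ p k s (cth μ lam γ k s) ≤ β := by
  have stepA : ∀ ε : ℝ, 0 < ε → ∑ k : Fin K, ∑ s : 𝒮, Mf μ p k s (cth μ lam γ k s + ε) ≤ β := by
    intro ε hε
    have hmem' : (lam + ε, γ) ∈ Δset K 𝒮 := ⟨by simp only; linarith [hmem.1], hmem.2⟩
    have hH := hmin (lam + ε, γ) hmem'
    rw [Hfun_eq hπ, Hfun_eq hπ] at hH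
    have hc' : ∀ (k : Fin K) (s : 𝒮), Jf μ p k s (lam + ε + γ k s / probS μ s)
        = Jf μ p k s (cth μ lam γ k s + ε) := by
      intro k s; congr 1; rw [cth]; ring
    have hcth : ∀ (k : Fin K) (s : 𝒮), lam + γ k s / probS μ s = cth μ lam γ k s := by
      intro k s; rw [cth]
    simp only [hc', hcth] at hH
    have hshift : ∀ (k : Fin K) (s : 𝒮), Jf μ p k s (cth μ lam γ k s + ε)
        ≤ Jf μ p k s (cth μ lam γ k s) - ε * Mf μ p k s (cth μ lam γ k s + ε) := by
      intro k s
      rw [Jf, Jf, Mf]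
      exact J_shift_up (qf_meas hpmeas k) (qf_bdd hp01 k) _ hε.le
    have hsum : ∑ k : Fin K, ∑ s : 𝒮, Jf μ p k s (cth μ lam γ k s + ε)
        ≤ ∑ k : Fin K, ∑ s : 𝒮,
            (Jf μ p k s (cth μ lam γ k s) - ε * Mf μ p k s (cth μ lam γ k s + ε)) :=
      Finset.sum_le_sum fun k _ => Finset.sum_le_sum fun s _ => hshift k s
    simp only [Finset.sum_sub_distrib, ← Finset.mul_sum] at hsum
    have h2 : ε * (∑ k : Fin K, ∑ s : 𝒮, Mf μ p k s (cth μ lam γ k s + ε)) ≤ ε * β := by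
      nlinarith [hH, hsum]
    exact le_of_mul_le_mul_left h2 hε
  have htend : Tendsto (fun n : ℕ => ∑ k : Fin K, ∑ s : 𝒮,
      Mf μ p k s (cth μ lam γ k s + 1/(n+1))) atTop
      (nhds (∑ k : Fin K, ∑ s : 𝒮, Mf μ p k s (cth μ lam γ k s))) := by
    refine tendsto_finset_sum _ fun k _ => tendsto_finset_sum _ fun s _ => ?_
    simp only [Mf]
    exact tendsto_M_up (qf_meas hpmeas k) one_pos _
  exact le_of_tendsto' htend fun n => stepA (1/(n+1)) (by positivity)

lemma oracle_size_ge [IsProbabilityMeasure μ] (hπ : ∀ s : 𝒮, 0 < probS μ s)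
    (hpmeas : ∀ k, Measurable fun q : 𝒳 × 𝒮 => p k q.1 q.2)
    (hp01 : ∀ k x s, p k x s ∈ Icc (0:ℝ) 1) (hA1 : Assumption1 μ p)
    (β : ℝ) {lam : ℝ} (γ : Fin K → 𝒮 → ℝ) (hmem : (lam, γ) ∈ Δset K 𝒮)
    (hmin : ∀ r ∈ Δset K 𝒮, Hfun μ p β lam γ ≤ Hfun μ p β r.1 r.2)
    (hlam : 0 < lam) :
    β ≤ ∑ k : Fin K, ∑ s : 𝒮, Mf μ p k s (cth μ lam γ k s) := by
  have stepA : ∀ ε : ℝ, 0 < ε → ε ≤ lam →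
      β ≤ ∑ k : Fin K, ∑ s : 𝒮, Mf μ p k s (cth μ lam γ k s - ε) := by
    intro ε hε hεlam
    have hmem' : (lam - ε, γ) ∈ Δset K 𝒮 := ⟨by simp only; linarith, hmem.2⟩
    have hH := hmin (lam - ε, γ) hmem'
    rw [Hfun_eq hπ, Hfun_eq hπ] at hH
    have hc' : ∀ (k : Fin K) (s : 𝒮), Jf μ p k s (lam - ε + γ k s / probS μ s)
        = Jf μ p k s (cth μ lam γ k s - ε) := by
      intro k s; congr 1; rw [cth]; ring
    have hcth : ∀ (k : Fin K) (s : 𝒮), lam + γ k s / probS μ s = cth μ lam γ k s := by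
      intro k s; rw [cth]
    simp only [hc', hcth] at hH
    have hshift : ∀ (k : Fin K) (s : 𝒮), Jf μ p k s (cth μ lam γ k s - ε)
        ≤ Jf μ p k s (cth μ lam γ k s) + ε * Mf μ p k s (cth μ lam γ k s - ε) := by
      intro k s
      rw [Jf, Jf, Mf]
      exact J_shift_down (qf_meas hpmeas k) (qf_bdd hp01 k) _ hε.le
    have hsum : ∑ k : Fin K, ∑ s : 𝒮, Jf μ p k s (cth μ lam γ k s - ε)
        ≤ ∑ k : Fin K, ∑ s : 𝒮,
            (Jf μ p k s (cth μ lam γ k s) + ε * Mf μ p k s (cth μ lam γ k s - ε)) :=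
      Finset.sum_le_sum fun k _ => Finset.sum_le_sum fun s _ => hshift k s
    simp only [Finset.sum_add_distrib, ← Finset.mul_sum] at hsum
    have h2 : ε * β ≤ ε * (∑ k : Fin K, ∑ s : 𝒮, Mf μ p k s (cth μ lam γ k s - ε)) := by
      nlinarith [hH, hsum]
    exact le_of_mul_le_mul_left h2 hε
  have htend : Tendsto (fun n : ℕ => ∑ k : Fin K, ∑ s : 𝒮,
      Mf μ p k s (cth μ lam γ k s - 1/(n+1))) atTop
      (nhds (∑ k : Fin K, ∑ s : 𝒮, Mf μ p k s (cth μ lam γ k s))) := by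
    refine tendsto_finset_sum _ fun k _ => tendsto_finset_sum _ fun s _ => ?_
    simp only [Mf]
    exact tendsto_M_down (qf_meas hpmeas k) one_pos _ (noatomS hπ hpmeas hA1 k s _)
  refine ge_of_tendsto htend ?_
  obtain ⟨N, hN⟩ := exists_nat_one_div_lt hlam
  rw [eventually_atTop]
  refine ⟨N, fun n hn => ?_⟩
  apply stepA (1/(n+1)) (by positivity)
  have h1 : (1:ℝ)/(n+1) ≤ 1/(N+1) := by
    apply div_le_div_of_nonneg_left one_pos.le (by positivity) (by exact_mod_cast by omega)
  linarith

lemma condProb_oracle [IsProbabilityMeasure μ] (hπ : ∀ s : 𝒮, 0 < probS μ s)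
    (hpmeas : ∀ k, Measurable fun q : 𝒳 × 𝒮 => p k q.1 q.2) (hA1 : Assumption1 μ p)
    (lam : ℝ) (γ : Fin K → 𝒮 → ℝ) (k : Fin K) (s : 𝒮) :
    condProb μ (memEvent (oracle μ p lam γ) k) s
      = Mf μ p k s (cth μ lam γ k s) / probS μ s := by
  rw [condProb_eq μ s (memEvent_meas (oracle_isClassifier hpmeas lam γ) k),
    nuS_memEvent_oracle lam γ k s]
  congr 1
  exact Mf_ge hπ hpmeas hA1 k s _

lemma fair_ratio [IsProbabilityMeasure μ] (hπ : ∀ s : 𝒮, 0 < probS μ s)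
    (hpmeas : ∀ k, Measurable fun q : 𝒳 × 𝒮 => p k q.1 q.2)
    (hp01 : ∀ k x s, p k x s ∈ Icc (0:ℝ) 1) (hA1 : Assumption1 μ p)
    (β lam : ℝ) (γ : Fin K → 𝒮 → ℝ) (hmem : (lam, γ) ∈ Δset K 𝒮)
    (hmin : ∀ r ∈ Δset K 𝒮, Hfun μ p β lam γ ≤ Hfun μ p β r.1 r.2)
    (k : Fin K) (s1 s2 : 𝒮) :
    Mf μ p k s1 (cth μ lam γ k s1) / probS μ s1
      = Mf μ p k s2 (cth μ lam γ k s2) / probS μ s2 := by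
  by_cases h12 : s1 = s2
  · rw [h12]
  · have h1 := oracle_fair_le hπ hpmeas hp01 hA1 β lam γ hmem hmin k h12
    have h2 := oracle_fair_le hπ hpmeas hp01 hA1 β lam γ hmem hmin k (Ne.symm h12)
    have hπ1 := hπ s1
    have hπ2 := hπ s2
    have h1' := mul_le_mul_of_nonneg_right h1 hπ2.le
    have h2' := mul_le_mul_of_nonneg_right h2 hπ1.le
    have e1 : probS μ s1 / probS μ s2 * Mf μ p k s2 (cth μ lam γ k s2) * probS μ s2
        = Mf μ p k s2 (cth μ lam γ k s2) * probS μ s1 := by field_simp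
    have e2 : probS μ s2 / probS μ s1 * Mf μ p k s1 (cth μ lam γ k s1) * probS μ s1
        = Mf μ p k s1 (cth μ lam γ k s1) * probS μ s2 := by field_simp
    rw [div_eq_div_iff hπ1.ne' hπ2.ne']
    rw [e1] at h1'
    rw [e2] at h2'
    linarith

lemma measure_memEvent_oracle [IsProbabilityMeasure μ] (hπ : ∀ s : 𝒮, 0 < probS μ s)
    (hpmeas : ∀ k, Measurable fun q : 𝒳 × 𝒮 => p k q.1 q.2) (hA1 : Assumption1 μ p)
    (lam : ℝ) (γ : Fin K → 𝒮 → ℝ) (k : Fin K) :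
    (μ (memEvent (oracle μ p lam γ) k)).toReal
      = ∑ s : 𝒮, Mf μ p k s (cth μ lam γ k s) := by
  rw [measure_memEvent_eq (oracle_isClassifier hpmeas lam γ) k]
  refine Finset.sum_congr rfl fun s _ => ?_
  rw [nuS_memEvent_oracle lam γ k s]
  exact Mf_ge hπ hpmeas hA1 k s _

lemma DPfair_oracle [IsProbabilityMeasure μ] (hπ : ∀ s : 𝒮, 0 < probS μ s)
    (hpmeas : ∀ k, Measurable fun q : 𝒳 × 𝒮 => p k q.1 q.2)
    (hp01 : ∀ k x s, p k x s ∈ Icc (0:ℝ) 1) (hA1 : Assumption1 μ p)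
    (β lam : ℝ) (γ : Fin K → 𝒮 → ℝ) (hmem : (lam, γ) ∈ Δset K 𝒮)
    (hmin : ∀ r ∈ Δset K 𝒮, Hfun μ p β lam γ ≤ Hfun μ p β r.1 r.2) :
    DPfair μ (oracle μ p lam γ) := by
  intro k s
  rw [condProb_oracle hπ hpmeas hA1 lam γ k s, measure_memEvent_oracle hπ hpmeas hA1 lam γ k]
  have : ∀ s' : 𝒮, Mf μ p k s' (cth μ lam γ k s')
      = probS μ s' * (Mf μ p k s (cth μ lam γ k s) / probS μ s) := by
    intro s'
    rw [← fair_ratio hπ hpmeas hp01 hA1 β lam γ hmem hmin k s' s,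
      mul_div_cancel₀ _ (hπ s').ne']
  rw [Finset.sum_congr rfl fun s' _ => this s', ← Finset.sum_mul, sum_probS μ, one_mul]

lemma expSize_oracle [IsProbabilityMeasure μ] (hπ : ∀ s : 𝒮, 0 < probS μ s)
    (hpmeas : ∀ k, Measurable fun q : 𝒳 × 𝒮 => p k q.1 q.2) (hA1 : Assumption1 μ p)
    (lam : ℝ) (γ : Fin K → 𝒮 → ℝ) :
    expSize μ (oracle μ p lam γ) = ∑ k : Fin K, ∑ s : 𝒮, Mf μ p k s (cth μ lam γ k s) := by
  rw [expSize_eq (oracle_isClassifier hpmeas lam γ)]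
  exact Finset.sum_congr rfl fun k _ => measure_memEvent_oracle hπ hpmeas hA1 lam γ k

lemma gamma_term_zero [IsProbabilityMeasure μ] (lam : ℝ) (γ : Fin K → 𝒮 → ℝ)
    (hmem : (lam, γ) ∈ Δset K 𝒮) {Γ : 𝒳 → 𝒮 → Set (Fin K)} (hDP : DPfair μ Γ) :
    ∑ k : Fin K, ∑ s : 𝒮, γ k s * condProb μ (memEvent Γ k) s = 0 := by
  refine Finset.sum_eq_zero fun k _ => ?_
  have : ∀ s : 𝒮, γ k s * condProb μ (memEvent Γ k) s
      = γ k s * (μ (memEvent Γ k)).toReal := fun s => by rw [hDP k s]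
  rw [Finset.sum_congr rfl fun s _ => this s, ← Finset.sum_mul, hmem.2 k, zero_mul]

lemma ae_group [IsProbabilityMeasure μ] (s : 𝒮) :
    ∀ᵐ ω ∂(nuS μ s), ω.2.1 = s := by
  rw [ae_iff]
  have hempty : {ω : 𝒳 × 𝒮 × Fin K | ¬ ω.2.1 = s} ∩ {ω | ω.2.1 = s} = ∅ := by
    ext ω; simp [Set.mem_inter_iff]
  have hE : MeasurableSet {ω : 𝒳 × 𝒮 × Fin K | ¬ ω.2.1 = s} := (measurableSet_As s).compl
  rw [nuS_apply μ s hE, hempty, measure_empty]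

lemma lagRisk_oracle [IsProbabilityMeasure μ] (hπ : ∀ s : 𝒮, 0 < probS μ s)
    (hpmeas : ∀ k, Measurable fun q : 𝒳 × 𝒮 => p k q.1 q.2)
    (hp01 : ∀ k x s, p k x s ∈ Icc (0:ℝ) 1)
    (hlink : ∀ (k : Fin K) (A : Set (𝒳 × 𝒮)), MeasurableSet A →
      (μ {ω | ω.2.2 = k ∧ (ω.1, ω.2.1) ∈ A}).toReal
        = ∫ ω in {ω : 𝒳 × 𝒮 × Fin K | (ω.1, ω.2.1) ∈ A}, p k ω.1 ω.2.1 ∂μ)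
    (β lam : ℝ) (γ : Fin K → 𝒮 → ℝ) :
    lagRisk μ β lam γ (oracle μ p lam γ) = 1 - Hfun μ p β lam γ := by
  rw [lagRisk_decomp hπ hpmeas hp01 (oracle_isClassifier hpmeas lam γ) hlink β lam γ]
  have : ∀ (k : Fin K) (s : 𝒮),
      ∫ ω, gfn μ p lam γ (oracle μ p lam γ) k s ω ∂(nuS μ s) = 0 := by
    intro k s
    have hz : ∀ᵐ ω ∂(nuS μ s), gfn μ p lam γ (oracle μ p lam γ) k s ω = (0:ℝ) :=
      (ae_group s).mono fun ω hω => gfn_oracle_zero lam γ k s ω hω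
    rw [integral_congr_ae hz, integral_zero]
  rw [Finset.sum_congr rfl fun k _ => Finset.sum_congr rfl fun s _ => this k s]
  simp

end Core

theorem statement6
    {𝒳 𝒮 : Type*} [MeasurableSpace 𝒳] [MeasurableSpace 𝒮] [MeasurableSingletonClass 𝒮]
    [Fintype 𝒮] [Nonempty 𝒮] {K : ℕ} (hK : 2 ≤ K)
    (μ : Measure (𝒳 × 𝒮 × Fin K)) (hμ : IsProbabilityMeasure μ)
    (hπ : ∀ s : 𝒮, 0 < probS μ s)
    (p : Fin K → 𝒳 → 𝒮 → ℝ)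
    (hpmeas : ∀ k, Measurable fun q : 𝒳 × 𝒮 => p k q.1 q.2)
    (hp01 : ∀ k x s, p k x s ∈ Icc (0:ℝ) 1)
    (hpsum : ∀ x s, ∑ k : Fin K, p k x s = 1)
    (hlink : ∀ (k : Fin K) (A : Set (𝒳 × 𝒮)), MeasurableSet A →
      (μ {ω | ω.2.2 = k ∧ (ω.1, ω.2.1) ∈ A}).toReal
        = ∫ ω in {ω : 𝒳 × 𝒮 × Fin K | (ω.1, ω.2.1) ∈ A}, p k ω.1 ω.2.1 ∂μ)
    (β : ℝ) (hβ0 : 0 < β) (hβK : β < (K : ℝ))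
    (hA1 : Assumption1 μ p)
    (lam : ℝ) (γ : Fin K → 𝒮 → ℝ) (hmem : (lam, γ) ∈ Δset K 𝒮)
    (hmin : ∀ r ∈ Δset K 𝒮, Hfun μ p β lam γ ≤ Hfun μ p β r.1 r.2)
 :
    ∀ Γt : 𝒳 → 𝒮 → Set (Fin K), IsClassifier Γt → DPfair μ Γt → expSize μ Γt ≤ β →
      (∀ Γ : 𝒳 → 𝒮 → Set (Fin K), IsClassifier Γ → DPfair μ Γ → expSize μ Γ ≤ β →
        risk μ Γt ≤ risk μ Γ) →
      ∀ᵐ ω ∂μ, Γt ω.1 ω.2.1 = oracle μ p lam γ ω.1 ω.2.1 := by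
  intro Γt hΓt hDPt hTt hopt
  haveI := hμ
  classical
  have hOcls : IsClassifier (oracle μ p lam γ) := oracle_isClassifier hpmeas lam γ
  have hDPO : DPfair μ (oracle μ p lam γ) := DPfair_oracle hπ hpmeas hp01 hA1 β lam γ hmem hmin
  have hTO : expSize μ (oracle μ p lam γ)
      = ∑ k : Fin K, ∑ s : 𝒮, Mf μ p k s (cth μ lam γ k s) :=
    expSize_oracle hπ hpmeas hA1 lam γ
  have hTOle : expSize μ (oracle μ p lam γ) ≤ β := by
    rw [hTO]; exact oracle_size_le hπ hpmeas hp01 β lam γ hmem hmin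
  have hslack : lam * (expSize μ (oracle μ p lam γ) - β) = 0 := by
    rcases eq_or_lt_of_le hmem.1 with h0 | h0
    · have hlz : lam = 0 := h0.symm
      rw [hlz, zero_mul]
    · have hge := oracle_size_ge hπ hpmeas hp01 hA1 β γ hmem hmin h0
      have heq : expSize μ (oracle μ p lam γ) = β :=
        le_antisymm hTOle (by rw [hTO]; exact hge)
      rw [heq, sub_self, mul_zero]
  have hγO : ∑ k : Fin K, ∑ s : 𝒮, γ k s * condProb μ (memEvent (oracle μ p lam γ) k) s = 0 :=
    gamma_term_zero lam γ hmem hDPO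
  have hγt : ∑ k : Fin K, ∑ s : 𝒮, γ k s * condProb μ (memEvent Γt k) s = 0 :=
    gamma_term_zero lam γ hmem hDPt
  have hlagO : lagRisk μ β lam γ (oracle μ p lam γ) = 1 - Hfun μ p β lam γ :=
    lagRisk_oracle hπ hpmeas hp01 hlink β lam γ
  have hriskO : risk μ (oracle μ p lam γ) = lagRisk μ β lam γ (oracle μ p lam γ) := by
    rw [lagRisk, hγO, hslack]
    ring
  have hlagT : lagRisk μ β lam γ Γt = 1 - Hfun μ p β lam γ
      + ∑ k : Fin K, ∑ s : 𝒮, ∫ ω, gfn μ p lam γ Γt k s ω ∂(nuS μ s) :=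
    lagRisk_decomp hπ hpmeas hp01 hΓt hlink β lam γ
  have hlagT2 : lagRisk μ β lam γ Γt ≤ risk μ Γt := by
    rw [lagRisk, hγt, add_zero]
    have h1 : lam * (expSize μ Γt - β) ≤ 0 :=
      mul_nonpos_of_nonneg_of_nonpos hmem.1 (by linarith)
    linarith
  have hchain : risk μ Γt ≤ risk μ (oracle μ p lam γ) := hopt _ hOcls hDPO hTOle
  have hGnn : ∀ (k : Fin K) (s : 𝒮), 0 ≤ ∫ ω, gfn μ p lam γ Γt k s ω ∂(nuS μ s) :=
    fun k s => integral_nonneg (fun ω => gfn_nonneg lam γ Γt k s ω)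
  have hGzero : ∑ k : Fin K, ∑ s : 𝒮, ∫ ω, gfn μ p lam γ Γt k s ω ∂(nuS μ s) = 0 := by
    have hle : ∑ k : Fin K, ∑ s : 𝒮, ∫ ω, gfn μ p lam γ Γt k s ω ∂(nuS μ s) ≤ 0 := by
      linarith
    exact le_antisymm hle (Finset.sum_nonneg fun k _ => Finset.sum_nonneg fun s _ => hGnn k s)
  have hG0 : ∀ (k : Fin K) (s : 𝒮), ∫ ω, gfn μ p lam γ Γt k s ω ∂(nuS μ s) = 0 := by
    intro k s
    have houter := (Finset.sum_eq_zero_iff_of_nonneg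
      (fun k _ => Finset.sum_nonneg fun s _ => hGnn k s)).mp hGzero k (Finset.mem_univ k)
    exact (Finset.sum_eq_zero_iff_of_nonneg (fun s _ => hGnn k s)).mp houter s (Finset.mem_univ s)
  have hae : ∀ (k : Fin K) (s : 𝒮), ∀ᵐ ω ∂(nuS μ s), gfn μ p lam γ Γt k s ω = 0 := by
    intro k s
    exact (integral_eq_zero_iff_of_nonneg (fun ω => gfn_nonneg lam γ Γt k s ω)
      (integrable_gfn hpmeas hp01 lam γ hΓt k s (nuS μ s))).mp (hG0 k s)
  have hne : ∀ (k : Fin K) (s : 𝒮), ∀ᵐ ω ∂(nuS μ s), qf p k ω ≠ cth μ lam γ k s := by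
    intro k s
    rw [ae_iff]
    simp only [ne_eq, not_not]
    exact noatomS hπ hpmeas hA1 k s _
  have hs_ae : ∀ s : 𝒮, ∀ᵐ ω ∂(nuS μ s), Γt ω.1 ω.2.1 = oracle μ p lam γ ω.1 ω.2.1 := by
    intro s
    have h1 : ∀ᵐ ω ∂(nuS μ s), ∀ k : Fin K, gfn μ p lam γ Γt k s ω = 0 :=
      ae_all_iff.mpr fun k => hae k s
    have h2 : ∀ᵐ ω ∂(nuS μ s), ∀ k : Fin K, qf p k ω ≠ cth μ lam γ k s :=
      ae_all_iff.mpr fun k => hne k s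
    filter_upwards [h1, h2, ae_group s] with ω hg hq hs
    ext k
    have hgk := hg k
    rw [gfn] at hgk
    have horacle : k ∈ oracle μ p lam γ ω.1 ω.2.1 ↔ cth μ lam γ k s ≤ qf p k ω := by
      simp only [oracle, Set.mem_setOf_eq, cth, qf, hs]
    rcases (hq k).lt_or_gt with hlt | hlt
    · -- p_k < threshold : k in neither set
      have hmax : max (qf p k ω - cth μ lam γ k s) 0 = 0 := max_eq_right (by linarith)
      rw [hmax] at hgk
      have hnotin : ω ∉ memEvent Γt k := by
        intro hin
        rw [Set.indicator_of_mem hin] at hgk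
        have : qf p k ω - cth μ lam γ k s = 0 := by linarith
        linarith
      exact iff_of_false hnotin (by rw [horacle]; exact not_le.mpr hlt)
    · -- threshold < p_k : k in both sets
      have hmax : max (qf p k ω - cth μ lam γ k s) 0 = qf p k ω - cth μ lam γ k s :=
        max_eq_left (by linarith)
      rw [hmax] at hgk
      have hin : ω ∈ memEvent Γt k := by
        by_contra hnot
        rw [Set.indicator_of_notMem hnot] at hgk
        linarith
      exact iff_of_true hin (by rw [horacle]; exact hlt.le)
  -- assemble over groups
  set N := {ω : 𝒳 × 𝒮 × Fin K | ¬ Γt ω.1 ω.2.1 = oracle μ p lam γ ω.1 ω.2.1} with hN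
  have hNrep : N = ⋃ k : Fin K,
      ((memEvent Γt k \ memEvent (oracle μ p lam γ) k)
        ∪ (memEvent (oracle μ p lam γ) k \ memEvent Γt k)) := by
    ext ω
    simp only [hN, Set.mem_setOf_eq, Set.mem_iUnion, Set.mem_union, Set.mem_diff,
      memEvent, Set.ext_iff, not_forall]
    constructor
    · rintro ⟨k, hk⟩
      refine ⟨k, ?_⟩
      by_cases h1 : k ∈ Γt ω.1 ω.2.1 <;> by_cases h2 : k ∈ oracle μ p lam γ ω.1 ω.2.1 <;> tauto
    · rintro ⟨k, hk⟩
      exact ⟨k, by tauto⟩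
  have hNmeas : MeasurableSet N := by
    rw [hNrep]
    exact MeasurableSet.iUnion fun k =>
      ((memEvent_meas hΓt k).diff (memEvent_meas hOcls k)).union
        ((memEvent_meas hOcls k).diff (memEvent_meas hΓt k))
  rw [ae_iff]
  have hsum := measure_eq_sum_nuS μ hNmeas
  have hzero : ∀ s : 𝒮, nuS μ s N = 0 := fun s => ae_iff.mp (hs_ae s)
  have : μ N = 0 := by
    rw [hsum]
    exact Finset.sum_eq_zero fun s _ => hzero s
  exact this

end
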